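/- Let k ≥ 3 and l ≥ 3 be integers, and let G be a connected weak k-bicritical graph having an l-sufficient pair. Then diam(G) ≤ 2k − l + 1. -/
import Mathlib


open SimpleGraph Set

/-- `S` is a dominating set of the induced subgraph of `G` on the vertex set `A`:
`S ⊆ A` and every vertex of `A` is in the closed neighborhood of some vertex of `S`. -/
def IsDomOn {V : Type*} (G : SimpleGraph V) (A S : Set V) : Prop :=
  S ⊆ A ∧ ∀ v ∈ A, ∃ s ∈ S, s = v ∨ G.Adj s v

/-- The domination number of the induced subgraph of `G` on the vertex set `A`. -/
noncomputable def domNumOn {V : Type*} (G : SimpleGraph V) (A : Set V) : ℕ :=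
  sInf {n | ∃ S : Set V, IsDomOn G A S ∧ S.ncard = n}

/-- The domination number of `G`. -/
noncomputable def domNum {V : Type*} (G : SimpleGraph V) : ℕ :=
  domNumOn G Set.univ

/-- `y` is a critical vertex of the induced subgraph of `G` on `A`:
deleting `y` decreases the domination number. -/
def IsCritVertexOn {V : Type*} (G : SimpleGraph V) (A : Set V) (y : V) : Prop :=
  domNumOn G (A \ {y}) < domNumOn G A

/-- The induced subgraph of `G` on `A` is critical: all its vertices are critical. -/
def CriticalOn {V : Type*} (G : SimpleGraph V) (A : Set V) : Prop :=
  ∀ y ∈ A, IsCritVertexOn G A y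

/-- The induced subgraph of `G` on `A` is weak bicritical: no vertex deletion increases the
domination number (`V⁺ = ∅`), and deleting any vertex that keeps the domination number
unchanged (a vertex of `V⁰`) yields a critical graph. -/
def WeakBicriticalOn {V : Type*} (G : SimpleGraph V) (A : Set V) : Prop :=
  (∀ y ∈ A, domNumOn G (A \ {y}) ≤ domNumOn G A) ∧
  (∀ y ∈ A, domNumOn G (A \ {y}) = domNumOn G A → CriticalOn G (A \ {y}))

/-- A pair (x, j) of a vertex x and an integer j ≥ 2 is l-sufficient in a connected graph G
if x is a diametrical vertex of G and there exists a γ-set S of G with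
|S ∩ {y : d_G(x,y) ≤ j}| ≥ (j + l)/2. -/
def SufficientPair {V : Type*} (G : SimpleGraph V) (l : ℕ) (x : V) (j : ℕ) : Prop :=
  2 ≤ j ∧ (∃ y : V, G.dist x y = G.diam) ∧
    ∃ S : Set V, IsDomOn G Set.univ S ∧ S.ncard = domNum G ∧
      j + l ≤ 2 * (S ∩ {y : V | G.dist x y ≤ j}).ncard

section Helpers

set_option linter.unusedSectionVars false

variable {V : Type*} [Fintype V] {G : SimpleGraph V}

lemma isDomOn_refl (G : SimpleGraph V) (A : Set V) : IsDomOn G A A :=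
  ⟨subset_rfl, fun v hv => ⟨v, hv, Or.inl rfl⟩⟩

lemma exists_min_dom (G : SimpleGraph V) (A : Set V) :
    ∃ S : Set V, IsDomOn G A S ∧ S.ncard = domNumOn G A := by
  have hne : {n | ∃ S : Set V, IsDomOn G A S ∧ S.ncard = n}.Nonempty :=
    ⟨A.ncard, A, isDomOn_refl G A, rfl⟩
  exact Nat.sInf_mem hne

lemma domNumOn_le {A S : Set V} (h : IsDomOn G A S) : domNumOn G A ≤ S.ncard :=
  Nat.sInf_le ⟨S, h, rfl⟩

lemma domNum_le {S : Set V} (h : ∀ v, ∃ s ∈ S, s = v ∨ G.Adj s v) :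
    domNumOn G Set.univ ≤ S.ncard :=
  domNumOn_le ⟨Set.subset_univ S, fun v _ => h v⟩

lemma ncard_split_pred (D A B : Set V) (hcover : ∀ d ∈ D, d ∈ A ∨ d ∈ B)
    (hdisj : ∀ v, v ∈ A → v ∈ B → False) :
    (D ∩ A).ncard + (D ∩ B).ncard = D.ncard := by
  rw [← Set.ncard_union_eq ?_ (Set.toFinite _) (Set.toFinite _)]
  · congr 1
    ext v
    simp only [Set.mem_union, Set.mem_inter_iff]
    constructor
    · rintro (⟨h, _⟩ | ⟨h, _⟩) <;> exact h
    · intro h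
      rcases hcover v h with h' | h'
      · exact Or.inl ⟨h, h'⟩
      · exact Or.inr ⟨h, h'⟩
  · rw [Set.disjoint_left]
    rintro v ⟨_, h1⟩ ⟨_, h2⟩
    exact hdisj v h1 h2

lemma lv_le_of_dom (hconn : G.Connected) {x s v : V} (h : s = v ∨ G.Adj s v) :
    G.dist x v ≤ G.dist x s + 1 ∧ G.dist x s ≤ G.dist x v + 1 := by
  rcases h with rfl | h
  · omega
  · have h1 : G.dist s v ≤ 1 := by
      simpa using SimpleGraph.dist_le (SimpleGraph.Walk.cons h SimpleGraph.Walk.nil)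
    have h2 : G.dist v s ≤ 1 := by
      simpa using SimpleGraph.dist_le (SimpleGraph.Walk.cons h.symm SimpleGraph.Walk.nil)
    have t1 := hconn.dist_triangle (u := x) (v := s) (w := v)
    have t2 := hconn.dist_triangle (u := x) (v := v) (w := s)
    omega

lemma walk_split (hconn : G.Connected) {a b : V} (p : G.Walk a b) (i : ℕ) (hi : i ≤ p.length) :
    ∃ u, G.dist a u ≤ i ∧ G.dist u b ≤ p.length - i := by
  induction p generalizing i with
  | nil =>
    rename_i c
    refine ⟨c, ?_, ?_⟩ <;> · rw [SimpleGraph.dist_self]; omega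
  | @cons a a' b h q ih =>
    cases i with
    | zero =>
      exact ⟨a, by simp, SimpleGraph.dist_le _⟩
    | succ i' =>
      have hlen : (SimpleGraph.Walk.cons h q).length = q.length + 1 :=
        SimpleGraph.Walk.length_cons _ _
      obtain ⟨u, h1, h2⟩ := ih i' (by omega)
      refine ⟨u, ?_, ?_⟩
      · have hadj : G.dist a a' ≤ 1 := by
          simpa using SimpleGraph.dist_le (SimpleGraph.Walk.cons h SimpleGraph.Walk.nil)
        have := hconn.dist_triangle (u := a) (v := a') (w := u)
        omega
      · omega

lemma exists_level (hconn : G.Connected) (x v : V) (i : ℕ) (h : i ≤ G.dist x v) :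
    ∃ u, G.dist x u = i := by
  obtain ⟨p, hp⟩ := hconn.exists_walk_length_eq_dist x v
  obtain ⟨u, h1, h2⟩ := walk_split hconn p i (by omega)
  refine ⟨u, le_antisymm h1 ?_⟩
  have := hconn.dist_triangle (u := x) (v := u) (w := v)
  omega

lemma master (hconn : G.Connected) (hwb : WeakBicriticalOn G Set.univ) {k : ℕ}
    (hdom : domNumOn G Set.univ = k) : ∀ N : ℕ,
    (∀ (x vm : V), (∀ u, G.dist x u ≤ G.dist x vm) →
      ∀ (t q : ℕ) (w : V) (R : Set V), 1 ≤ t → 1 ≤ q → q ≤ N → G.dist x vm = t + 2*q →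
      (∀ T' : Set V, (∀ v, G.dist x v + 1 ≤ t → ∃ s ∈ T', s = v ∨ G.Adj s v) →
        k ≤ T'.ncard + q) →
      t ≤ G.dist x w → G.dist x w ≤ t+1 →
      (∀ v, G.dist x v = t ∨ G.dist x v = t+1 → (w = v ∨ G.Adj w v)) →
      (∀ r ∈ R, t+2 ≤ G.dist x r) → R.ncard + 1 ≤ q →
      (∀ v, t+2 ≤ G.dist x v → (w = v ∨ G.Adj w v) ∨ ∃ s ∈ R, s = v ∨ G.Adj s v) →
      False)
    ∧
    (∀ (x : V) (S : Set V), (∀ v, ∃ s ∈ S, s = v ∨ G.Adj s v) → S.ncard = k →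
      ∀ j : ℕ, k ≤ (S ∩ {v | G.dist x v ≤ j}).ncard + N →
      ∀ v, G.dist x v ≤ j + 2*(k - (S ∩ {v | G.dist x v ≤ j}).ncard) + 1) := by
  intro N
  induction N using Nat.strong_induction_on with
  | _ N IH =>
  -- ===================== CR part =====================
  have hCR : ∀ (x vm : V), (∀ u, G.dist x u ≤ G.dist x vm) →
      ∀ (t q : ℕ) (w : V) (R : Set V), 1 ≤ t → 1 ≤ q → q ≤ N → G.dist x vm = t + 2*q →
      (∀ T' : Set V, (∀ v, G.dist x v + 1 ≤ t → ∃ s ∈ T', s = v ∨ G.Adj s v) →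
        k ≤ T'.ncard + q) →
      t ≤ G.dist x w → G.dist x w ≤ t+1 →
      (∀ v, G.dist x v = t ∨ G.dist x v = t+1 → (w = v ∨ G.Adj w v)) →
      (∀ r ∈ R, t+2 ≤ G.dist x r) → R.ncard + 1 ≤ q →
      (∀ v, t+2 ≤ G.dist x v → (w = v ∨ G.Adj w v) ∨ ∃ s ∈ R, s = v ∨ G.Adj s v) →
      False := by
    intro x vm hvm t q w R ht hq hqN hT hH1 hw1 hw2 hcov2 hR1 hRcard hcov3
    rcases Nat.lt_or_ge q N with hlt | hge
    · exact (IH q hlt).1 x vm hvm t q w R ht hq le_rfl hT hH1 hw1 hw2 hcov2 hR1 hRcard hcov3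
    have hqN' : q = N := le_antisymm hqN hge
    -- common package
    have common : ∃ E Q : Set V,
        (∀ v, ∃ s ∈ E, s = v ∨ G.Adj s v) ∧ E.ncard = k ∧
        (∀ u ∈ Q, t+2 ≤ G.dist x u) ∧ Q.ncard + 1 ≤ q ∧
        (∀ v, t+2 ≤ G.dist x v → ∃ s ∈ Q, s = v ∨ G.Adj s v) ∧
        (∀ a : ℕ, t+2 ≤ a →
          E ∩ {v | a ≤ G.dist x v} = Q ∩ {v | a ≤ G.dist x v}) := by
      rcases Nat.lt_or_ge (domNumOn G (Set.univ \ {w})) k with hA | hA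
      · -- case (a): w is a critical vertex
        obtain ⟨D, hD, hDcard⟩ := exists_min_dom G (Set.univ \ {w})
        have hDk : D.ncard + 1 ≤ k := by omega
        have hwD : w ∉ D := fun h => (hD.1 h).2 rfl
        have havoid : ∀ d ∈ D, ¬(d = w ∨ G.Adj d w) := by
          intro d hd hdw
          have hdomD : ∀ v, ∃ s ∈ D, s = v ∨ G.Adj s v := by
            intro v
            by_cases hv : v = w
            · subst hv; exact ⟨d, hd, hdw⟩
            · exact hD.2 v ⟨Set.mem_univ v, by simp [hv]⟩
          have h2 := domNum_le hdomD
          omega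
        have hDlev : ∀ d ∈ D, ¬(G.dist x d = t ∨ G.dist x d = t+1) := by
          intro d hd hdl
          refine havoid d hd ?_
          rcases hcov2 d hdl with h | h
          · exact Or.inl h.symm
          · exact Or.inr h.symm
        set Q := D ∩ {v | t + 2 ≤ G.dist x v} with hQdef
        have hsplitD : (D ∩ {v | G.dist x v + 1 ≤ t}).ncard + Q.ncard = D.ncard := by
          refine ncard_split_pred D _ _ ?_ ?_
          · intro d hd
            have := hDlev d hd
            by_cases h : G.dist x d + 1 ≤ t
            · exact Or.inl h
            · exact Or.inr (by simp only [Set.mem_setOf_eq]; omega)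
          · intro v h1 h2
            simp only [Set.mem_setOf_eq] at h1 h2
            omega
        have hDB : ∀ v, G.dist x v + 1 ≤ t →
            ∃ s ∈ D ∩ {v | G.dist x v + 1 ≤ t}, s = v ∨ G.Adj s v := by
          intro v hv
          have hvw : v ≠ w := by intro h; subst h; omega
          obtain ⟨s, hs, hsd⟩ := hD.2 v ⟨Set.mem_univ v, by simp [hvw]⟩
          have hb := lv_le_of_dom hconn (x := x) hsd
          have hslev := hDlev s hs
          exact ⟨s, ⟨hs, by simp only [Set.mem_setOf_eq]; omega⟩, hsd⟩
        have hDBcard := hH1 _ hDB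
        have hQcard : Q.ncard + 1 ≤ q := by omega
        have hQ2 : ∀ u ∈ Q, t+2 ≤ G.dist x u := fun u hu => hu.2
        have hQcov : ∀ v, t+2 ≤ G.dist x v → ∃ s ∈ Q, s = v ∨ G.Adj s v := by
          intro v hv
          have hvw : v ≠ w := by intro h; subst h; omega
          obtain ⟨s, hs, hsd⟩ := hD.2 v ⟨Set.mem_univ v, by simp [hvw]⟩
          have hb := lv_le_of_dom hconn (x := x) hsd
          have hslev := hDlev s hs
          exact ⟨s, ⟨hs, by simp only [Set.mem_setOf_eq]; omega⟩, hsd⟩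
        refine ⟨insert w D, Q, ?_, ?_, hQ2, hQcard, hQcov, ?_⟩
        · intro v
          by_cases hv : v = w
          · exact ⟨w, Set.mem_insert _ _, Or.inl hv.symm⟩
          · obtain ⟨s, hs, hsd⟩ := hD.2 v ⟨Set.mem_univ v, by simp [hv]⟩
            exact ⟨s, Set.mem_insert_of_mem _ hs, hsd⟩
        · have h1 : (insert w D).ncard = D.ncard + 1 :=
            Set.ncard_insert_of_notMem hwD (Set.toFinite _)
          have h2 : domNumOn G Set.univ ≤ (insert w D).ncard := by
            refine domNum_le ?_
            intro v
            by_cases hv : v = w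
            · exact ⟨w, Set.mem_insert _ _, Or.inl hv.symm⟩
            · obtain ⟨s, hs, hsd⟩ := hD.2 v ⟨Set.mem_univ v, by simp [hv]⟩
              exact ⟨s, Set.mem_insert_of_mem _ hs, hsd⟩
          omega
        · intro a ha
          ext u
          simp only [Set.mem_inter_iff, Set.mem_insert_iff, Set.mem_setOf_eq, hQdef]
          constructor
          · rintro ⟨rfl | hu, h2⟩
            · omega
            · exact ⟨⟨hu, by omega⟩, h2⟩
          · rintro ⟨⟨hu, _⟩, h2⟩
            exact ⟨Or.inr hu, h2⟩
      · -- case (b): G - w is critical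
        have hγup : domNumOn G (Set.univ \ {w}) ≤ k := by
          have := hwb.1 w (Set.mem_univ w)
          rwa [hdom] at this
        have hγeq : domNumOn G (Set.univ \ {w}) = k := le_antisymm hγup hA
        have hcrit : CriticalOn G (Set.univ \ {w}) :=
          hwb.2 w (Set.mem_univ w) (by rw [hγeq, hdom])
        have hwlv : G.dist x w = t ∨ G.dist x w = t + 1 := by omega
        obtain ⟨z, hzlv, hzw⟩ : ∃ z, (G.dist x z = t ∨ G.dist x z = t+1) ∧ z ≠ w := by
          rcases hwlv with h | h
          · obtain ⟨z, hz⟩ := exists_level hconn x vm (t+1) (by omega)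
            exact ⟨z, Or.inr hz, by intro hzw; rw [hzw] at hz; omega⟩
          · obtain ⟨z, hz⟩ := exists_level hconn x vm t (by omega)
            exact ⟨z, Or.inl hz, by intro hzw; rw [hzw] at hz; omega⟩
        have hwz : w = z ∨ G.Adj w z := hcov2 z hzlv
        have hcz : domNumOn G ((Set.univ \ {w}) \ {z}) < domNumOn G (Set.univ \ {w}) :=
          hcrit z ⟨Set.mem_univ z, by simp [hzw]⟩
        obtain ⟨D, hD, hDcard⟩ := exists_min_dom G ((Set.univ \ {w}) \ {z})
        have hDk : D.ncard + 1 ≤ k := by omega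
        have hwD : w ∉ D := fun h => ((hD.1 h).1).2 rfl
        have hzD : z ∉ D := fun h => (hD.1 h).2 rfl
        have hmemD : ∀ v, v ≠ w → v ≠ z → v ∈ (Set.univ \ {w}) \ {z} :=
          fun v h1 h2 => ⟨⟨Set.mem_univ v, by simp [h1]⟩, by simp [h2]⟩
        set Q := D ∩ {v | t + 1 ≤ G.dist x v} with hQdef
        have hsplitD : (D ∩ {v | G.dist x v ≤ t}).ncard + Q.ncard = D.ncard := by
          refine ncard_split_pred D _ _ ?_ ?_
          · intro d _
            by_cases h : G.dist x d ≤ t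
            · exact Or.inl h
            · exact Or.inr (by simp only [Set.mem_setOf_eq]; omega)
          · intro v h1 h2
            simp only [Set.mem_setOf_eq] at h1 h2
            omega
        have hDB : ∀ v, G.dist x v + 1 ≤ t →
            ∃ s ∈ D ∩ {v | G.dist x v ≤ t}, s = v ∨ G.Adj s v := by
          intro v hv
          have hvw : v ≠ w := by intro h; subst h; omega
          have hvz : v ≠ z := by intro h; subst h; omega
          obtain ⟨s, hs, hsd⟩ := hD.2 v (hmemD v hvw hvz)
          have hb := lv_le_of_dom hconn (x := x) hsd
          exact ⟨s, ⟨hs, by simp only [Set.mem_setOf_eq]; omega⟩, hsd⟩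
        have hDBcard := hH1 _ (by
          intro v hv
          obtain ⟨s, hs, hsd⟩ := hDB v hv
          exact ⟨s, hs, hsd⟩)
        have hQcard : Q.ncard + 1 ≤ q := by omega
        have hQcov : ∀ v, t+2 ≤ G.dist x v → ∃ s ∈ Q, s = v ∨ G.Adj s v := by
          intro v hv
          have hvw : v ≠ w := by intro h; subst h; omega
          have hvz : v ≠ z := by intro h; subst h; omega
          obtain ⟨s, hs, hsd⟩ := hD.2 v (hmemD v hvw hvz)
          have hb := lv_le_of_dom hconn (x := x) hsd
          exact ⟨s, ⟨hs, by simp only [Set.mem_setOf_eq]; omega⟩, hsd⟩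
        have hEdom : ∀ v, ∃ s ∈ insert w D, s = v ∨ G.Adj s v := by
          intro v
          by_cases hv : v = w
          · exact ⟨w, Set.mem_insert _ _, Or.inl hv.symm⟩
          by_cases hv' : v = z
          · subst hv'; exact ⟨w, Set.mem_insert _ _, hwz⟩
          · obtain ⟨s, hs, hsd⟩ := hD.2 v (hmemD v hv hv')
            exact ⟨s, Set.mem_insert_of_mem _ hs, hsd⟩
        have hEcard : (insert w D).ncard = k := by
          have h1 : (insert w D).ncard = D.ncard + 1 :=
            Set.ncard_insert_of_notMem hwD (Set.toFinite _)
          have h2 := domNum_le hEdom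
          omega
        have hEQ : ∀ a : ℕ, t+2 ≤ a →
            insert w D ∩ {v | a ≤ G.dist x v} = Q ∩ {v | a ≤ G.dist x v} := by
          intro a ha
          ext u
          simp only [Set.mem_inter_iff, Set.mem_insert_iff, Set.mem_setOf_eq, hQdef]
          constructor
          · rintro ⟨rfl | hu, h2⟩
            · omega
            · exact ⟨⟨hu, by omega⟩, h2⟩
          · rintro ⟨⟨hu, _⟩, h2⟩
            exact ⟨Or.inr hu, h2⟩
        have hQ2 : ∀ u ∈ Q, t+2 ≤ G.dist x u := by
          intro u hu
          by_contra hu2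
          have hult : G.dist x u = t + 1 := by
            have := hu.2
            simp only [Set.mem_setOf_eq] at this
            omega
          -- FC-IH at (E, t+1) gives a contradiction
          have huQ : u ∈ Q := hu
          have hq2 : 2 ≤ q := by
            have : 1 ≤ Q.ncard := (Set.ncard_pos (Set.toFinite _)).mpr ⟨u, huQ⟩
            omega
          have hsub : Q ∩ {v | t+2 ≤ G.dist x v} ⊆ Q \ {u} := by
            rintro r ⟨hr1, hr2⟩
            refine ⟨hr1, ?_⟩
            simp only [Set.mem_singleton_iff]
            intro h
            subst h
            simp only [Set.mem_setOf_eq] at hr2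
            omega
          have hdiffcard : (Q \ {u}).ncard + 1 = Q.ncard :=
            Set.ncard_diff_singleton_add_one huQ (Set.toFinite _)
          have hnf : (Q ∩ {v | t+2 ≤ G.dist x v}).ncard + 2 ≤ q := by
            have := Set.ncard_le_ncard hsub (Set.toFinite _)
            omega
          have hsp : ((insert w D) ∩ {v | G.dist x v ≤ t+1}).ncard +
              ((insert w D) ∩ {v | t+2 ≤ G.dist x v}).ncard = k := by
            rw [← hEcard]
            refine ncard_split_pred _ _ _ ?_ ?_
            · intro d _
              by_cases h : G.dist x d ≤ t+1
              · exact Or.inl h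
              · exact Or.inr (by simp only [Set.mem_setOf_eq]; omega)
            · intro v h1 h2
              simp only [Set.mem_setOf_eq] at h1 h2
              omega
          rw [hEQ (t+2) le_rfl] at hsp
          set nf := (Q ∩ {v | t+2 ≤ G.dist x v}).ncard with hnfdef
          have hfc := (IH nf (by omega)).2 x (insert w D) hEdom hEcard (t+1)
            (by omega) vm
          omega
        exact ⟨insert w D, Q, hEdom, hEcard, hQ2, hQcard, hQcov, hEQ⟩
    -- ===================== common continuation =====================
    obtain ⟨E, Q, hEdom, hEcard, hQ2, hQcard, hQcov, hEQ⟩ := common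
    obtain ⟨v₂, hv₂⟩ := exists_level hconn x vm (t+2) (by omega)
    -- q = 1 base case
    rcases Nat.lt_or_ge q 2 with hq1 | hq2
    · have hQ0 : Q.ncard = 0 := by omega
      have hQemp : Q = ∅ := (Set.ncard_eq_zero (Set.toFinite _)).mp hQ0
      obtain ⟨s, hs, -⟩ := hQcov v₂ (by omega)
      rw [hQemp] at hs
      exact hs
    -- q ≥ 2
    -- FC-IH applied to E at a cut a - 1 (for a ≥ t+2)
    have hFCE : ∀ a : ℕ, t+2 ≤ a → (Q ∩ {v | a ≤ G.dist x v}).ncard < N →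
        t + 2*q ≤ a + 2 * (Q ∩ {v | a ≤ G.dist x v}).ncard := by
      intro a ha hm
      have hsp : (E ∩ {v | G.dist x v ≤ a-1}).ncard +
          (E ∩ {v | a ≤ G.dist x v}).ncard = k := by
        rw [← hEcard]
        refine ncard_split_pred _ _ _ ?_ ?_
        · intro d _
          by_cases h : G.dist x d ≤ a-1
          · exact Or.inl h
          · exact Or.inr (by simp only [Set.mem_setOf_eq]; omega)
        · intro v h1 h2
          simp only [Set.mem_setOf_eq] at h1 h2
          omega
      rw [hEQ a ha] at hsp
      set nf := (Q ∩ {v | a ≤ G.dist x v}).ncard with hnfdef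
      have hfc := (IH nf hm).2 x E hEdom hEcard (a-1) (by omega) vm
      omega
    set W := Q ∩ {v | G.dist x v ≤ t+3} with hWdef
    have hsplitQ : W.ncard + (Q ∩ {v | t+4 ≤ G.dist x v}).ncard = Q.ncard := by
      refine ncard_split_pred Q _ _ ?_ ?_
      · intro d _
        by_cases h : G.dist x d ≤ t+3
        · exact Or.inl h
        · exact Or.inr (by simp only [Set.mem_setOf_eq]; omega)
      · intro v h1 h2
        simp only [Set.mem_setOf_eq] at h1 h2
        omega
    have hWne : 1 ≤ W.ncard := by
      obtain ⟨s, hs, hsd⟩ := hQcov v₂ (by omega)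
      have hb := lv_le_of_dom hconn (x := x) hsd
      refine (Set.ncard_pos (Set.toFinite _)).mpr ⟨s, hs, ?_⟩
      simp only [Set.mem_setOf_eq]
      omega
    -- the count above the window (t+2, t+3)
    have hup4 := hFCE (t+4) (by omega) (by omega)
    have hW1 : W.ncard = 1 := by omega
    have hQexact : Q.ncard + 1 = q := by omega
    obtain ⟨w', hW'⟩ := Set.ncard_eq_one.mp hW1
    have hw'Q : w' ∈ Q := by
      have : w' ∈ W := by rw [hW']; rfl
      exact this.1
    have hw'lv1 : t+2 ≤ G.dist x w' := hQ2 w' hw'Q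
    have hw'lv2 : G.dist x w' ≤ t+3 := by
      have : w' ∈ W := by rw [hW']; rfl
      exact this.2
    have hQ4card : (Q ∩ {v | t+4 ≤ G.dist x v}).ncard + 2 = q := by omega
    -- no element of Q on level t+4
    have hLv4 : ∀ u ∈ Q, G.dist x u ≠ t+4 := by
      intro u huQ hu4
      have hu' : u ∈ Q ∩ {v | t+4 ≤ G.dist x v} := ⟨huQ, by simp only [Set.mem_setOf_eq]; omega⟩
      have hsub : Q ∩ {v | t+5 ≤ G.dist x v} ⊆ (Q ∩ {v | t+4 ≤ G.dist x v}) \ {u} := by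
        rintro r ⟨hr1, hr2⟩
        simp only [Set.mem_setOf_eq] at hr2
        refine ⟨⟨hr1, by simp only [Set.mem_setOf_eq]; omega⟩, ?_⟩
        simp only [Set.mem_singleton_iff]
        intro h
        subst h
        omega
      have hdiffcard : ((Q ∩ {v | t+4 ≤ G.dist x v}) \ {u}).ncard + 1 =
          (Q ∩ {v | t+4 ≤ G.dist x v}).ncard :=
        Set.ncard_diff_singleton_add_one hu' (Set.toFinite _)
      have hle := Set.ncard_le_ncard hsub (Set.toFinite _)
      have hup5 := hFCE (t+5) (by omega) (by omega)
      omega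
    -- w' dominates levels t+2 and t+3
    have hw'cov : ∀ v, G.dist x v = t+2 ∨ G.dist x v = t+3 → (w' = v ∨ G.Adj w' v) := by
      intro v hvlv
      obtain ⟨s, hsQ, hsd⟩ := hQcov v (by omega)
      have hb := lv_le_of_dom hconn (x := x) hsd
      have hs2 := hQ2 s hsQ
      have hs4 := hLv4 s hsQ
      have hsW : s ∈ W := ⟨hsQ, by simp only [Set.mem_setOf_eq]; omega⟩
      rw [hW'] at hsW
      rw [Set.mem_singleton_iff] at hsW
      subst hsW
      exact hsd
    -- new residual set
    set R' := Q \ {w'} with hR'def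
    have hR'1 : ∀ r ∈ R', (t+2)+2 ≤ G.dist x r := by
      rintro r ⟨hrQ, hrw'⟩
      simp only [Set.mem_singleton_iff] at hrw'
      have hr2 := hQ2 r hrQ
      by_contra hcon
      have : r ∈ W := ⟨hrQ, by simp only [Set.mem_setOf_eq]; omega⟩
      rw [hW'] at this
      exact hrw' this
    have hR'card : R'.ncard + 1 ≤ q - 1 := by
      have h5 : R'.ncard + 1 = Q.ncard := by
        rw [hR'def]
        exact Set.ncard_diff_singleton_add_one hw'Q (Set.toFinite _)
      omega
    have hH1' : ∀ T' : Set V, (∀ v, G.dist x v + 1 ≤ t+2 → ∃ s ∈ T', s = v ∨ G.Adj s v) →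
        k ≤ T'.ncard + (q-1) := by
      intro T' hT'
      have hdomU : ∀ v, ∃ s ∈ T' ∪ Q, s = v ∨ G.Adj s v := by
        intro v
        rcases Nat.lt_or_ge (G.dist x v) (t+2) with hv | hv
        · obtain ⟨s, hs, hsd⟩ := hT' v (by omega)
          exact ⟨s, Set.mem_union_left _ hs, hsd⟩
        · obtain ⟨s, hs, hsd⟩ := hQcov v hv
          exact ⟨s, Set.mem_union_right _ hs, hsd⟩
      have h1 := domNum_le hdomU
      have h2 := Set.ncard_union_le T' Q
      omega
    have hcov3' : ∀ v, (t+2)+2 ≤ G.dist x v →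
        (w' = v ∨ G.Adj w' v) ∨ ∃ s ∈ R', s = v ∨ G.Adj s v := by
      intro v hv
      obtain ⟨s, hsQ, hsd⟩ := hQcov v (by omega)
      by_cases hs : s = w'
      · subst hs; exact Or.inl hsd
      · exact Or.inr ⟨s, ⟨hsQ, by simp [hs]⟩, hsd⟩
    exact (IH (N-1) (by omega)).1 x vm hvm (t+2) (q-1) w' R'
      (by omega) (by omega) (by omega) (by omega) hH1'
      (by omega) (by omega) hw'cov hR'1 hR'card hcov3'
  -- ===================== FC part =====================
  refine ⟨hCR, ?_⟩
  intro x S hS hScard j hbound v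
  obtain ⟨vm, -, hvm'⟩ := Finset.exists_max_image Finset.univ (fun u => G.dist x u)
    ⟨v, Finset.mem_univ v⟩
  have hvm : ∀ u, G.dist x u ≤ G.dist x vm := fun u => hvm' u (Finset.mem_univ u)
  have hsjk : (S ∩ {v | G.dist x v ≤ j}).ncard ≤ k := by
    rw [← hScard]
    exact Set.ncard_le_ncard Set.inter_subset_left (Set.toFinite _)
  have hmain : G.dist x vm ≤ j + 2*(k - (S ∩ {v | G.dist x v ≤ j}).ncard) + 1 := by
    by_contra hcon
    push_neg at hcon
    set sj := (S ∩ {v | G.dist x v ≤ j}).ncard with hsjdef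
    rcases Nat.eq_or_lt_of_le hsjk with heq | hlt
    · -- c = 0
      have hSB : S ∩ {v | G.dist x v ≤ j} = S :=
        Set.eq_of_subset_of_ncard_le Set.inter_subset_left (by omega) (Set.toFinite _)
      obtain ⟨v₂, hv₂⟩ := exists_level hconn x vm (j+2) (by omega)
      obtain ⟨s, hs, hsd⟩ := hS v₂
      have hb := lv_le_of_dom hconn (x := x) hsd
      have hsB : s ∈ S ∩ {v | G.dist x v ≤ j} := by rw [hSB]; exact hs
      have hsj' : G.dist x s ≤ j := hsB.2
      omega
    by_cases hocc : ∃ s ∈ S, G.dist x s = j+1 ∨ G.dist x s = j+2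
    · -- a vertex of S just above the cut: move the cut up
      obtain ⟨s', hs', hs'lv⟩ := hocc
      have hns : s' ∉ S ∩ {v | G.dist x v ≤ j} := by
        rintro ⟨-, h⟩
        simp only [Set.mem_setOf_eq] at h
        omega
      have hsub : insert s' (S ∩ {v | G.dist x v ≤ j}) ⊆
          S ∩ {v | G.dist x v ≤ G.dist x s'} := by
        rintro u hu
        rcases Set.mem_insert_iff.mp hu with rfl | hu
        · exact ⟨hs', by simp only [Set.mem_setOf_eq]; omega⟩
        · refine ⟨hu.1, ?_⟩
          have := hu.2
          simp only [Set.mem_setOf_eq] at this ⊢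
          omega
      have hcard0 : sj + 1 ≤ (S ∩ {v | G.dist x v ≤ G.dist x s'}).ncard := by
        have h1 : (insert s' (S ∩ {v | G.dist x v ≤ j})).ncard = sj + 1 :=
          Set.ncard_insert_of_notMem hns (Set.toFinite _)
        rw [← h1]
        exact Set.ncard_le_ncard hsub (Set.toFinite _)
      have hub : (S ∩ {v | G.dist x v ≤ G.dist x s'}).ncard ≤ k := by
        rw [← hScard]
        exact Set.ncard_le_ncard Set.inter_subset_left (Set.toFinite _)
      have hN1 : 1 ≤ N := by omega
      have hfc := (IH (N-1) (by omega)).2 x S hS hScard (G.dist x s')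
        (by omega) vm
      omega
    · push_neg at hocc
      obtain ⟨v₂, hv₂⟩ := exists_level hconn x vm (j+2) (by omega)
      obtain ⟨w, hwS, hwd⟩ := hS v₂
      have hwb' := lv_le_of_dom hconn (x := x) hwd
      have hwlv : G.dist x w = j+3 := by
        have := hocc w hwS
        omega
      -- decompose S ∩ B (j+3)
      have hB3 : S ∩ {v | G.dist x v ≤ j+3} =
          (S ∩ {v | G.dist x v ≤ j}) ∪ (S ∩ {v | G.dist x v = j+3}) := by
        ext u
        simp only [Set.mem_inter_iff, Set.mem_union, Set.mem_setOf_eq]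
        constructor
        · rintro ⟨h1, h2⟩
          have := hocc u h1
          by_cases h : G.dist x u ≤ j
          · exact Or.inl ⟨h1, h⟩
          · exact Or.inr ⟨h1, by omega⟩
        · rintro (⟨h1, h2⟩ | ⟨h1, h2⟩)
          · exact ⟨h1, by omega⟩
          · exact ⟨h1, by omega⟩
      have hdisj3 : Disjoint (S ∩ {v | G.dist x v ≤ j}) (S ∩ {v | G.dist x v = j+3}) := by
        rw [Set.disjoint_left]
        rintro u ⟨-, h1⟩ ⟨-, h2⟩
        simp only [Set.mem_setOf_eq] at h1 h2
        omega
      have hcard3 : (S ∩ {v | G.dist x v ≤ j+3}).ncard =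
          sj + (S ∩ {v | G.dist x v = j+3}).ncard := by
        rw [hB3, Set.ncard_union_eq hdisj3 (Set.toFinite _) (Set.toFinite _)]
      set m3 := (S ∩ {v | G.dist x v = j+3}).ncard with hm3def
      have hm3pos : 1 ≤ m3 := (Set.ncard_pos (Set.toFinite _)).mpr ⟨w, hwS, hwlv⟩
      have hub3 : (S ∩ {v | G.dist x v ≤ j+3}).ncard ≤ k := by
        rw [← hScard]
        exact Set.ncard_le_ncard Set.inter_subset_left (Set.toFinite _)
      have hfc3 := (IH (N-1) (by omega)).2 x S hS hScard (j+3) (by omega) vm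
      rw [hcard3] at hfc3 hub3
      have hm3 : m3 = 1 := by omega
      have hTeq : G.dist x vm = j + 2*(k - sj) + 2 := by omega
      -- S ∩ Lv (j+3) = {w}
      have hSw3 : S ∩ {v | G.dist x v = j+3} = {w} := by
        obtain ⟨w'', hw''⟩ := Set.ncard_eq_one.mp (hm3def ▸ hm3)
        have hwmem : w ∈ S ∩ {v | G.dist x v = j+3} := ⟨hwS, hwlv⟩
        rw [hw''] at hwmem ⊢
        rw [Set.mem_singleton_iff] at hwmem
        rw [hwmem]
      have h3' : ∀ u ∈ S, G.dist x u = j+3 → u = w := by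
        intro u hu h
        have : u ∈ S ∩ {v | G.dist x v = j+3} := ⟨hu, h⟩
        rw [hSw3] at this
        exact this
      -- S ∩ Lv (j+4) = ∅
      have h4' : ∀ u ∈ S, G.dist x u ≠ j+4 := by
        intro u hu hu4
        have hnu : u ∉ insert w (S ∩ {v | G.dist x v ≤ j}) := by
          intro h
          rcases Set.mem_insert_iff.mp h with rfl | h
          · omega
          · have := h.2
            simp only [Set.mem_setOf_eq] at this
            omega
        have hnw : w ∉ S ∩ {v | G.dist x v ≤ j} := by
          rintro ⟨-, h⟩
          simp only [Set.mem_setOf_eq] at h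
          omega
        have hsub4 : insert u (insert w (S ∩ {v | G.dist x v ≤ j})) ⊆
            S ∩ {v | G.dist x v ≤ j+4} := by
          rintro r hr
          rcases Set.mem_insert_iff.mp hr with rfl | hr
          · exact ⟨hu, by simp only [Set.mem_setOf_eq]; omega⟩
          rcases Set.mem_insert_iff.mp hr with rfl | hr
          · exact ⟨hwS, by simp only [Set.mem_setOf_eq]; omega⟩
          · refine ⟨hr.1, ?_⟩
            have := hr.2
            simp only [Set.mem_setOf_eq] at this ⊢
            omega
        have hc4 : sj + 2 ≤ (S ∩ {v | G.dist x v ≤ j+4}).ncard := by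
          have h1 : (insert w (S ∩ {v | G.dist x v ≤ j})).ncard = sj + 1 :=
            Set.ncard_insert_of_notMem hnw (Set.toFinite _)
          have h2 : (insert u (insert w (S ∩ {v | G.dist x v ≤ j}))).ncard = sj + 2 := by
            rw [Set.ncard_insert_of_notMem hnu (Set.toFinite _), h1]
          rw [← h2]
          exact Set.ncard_le_ncard hsub4 (Set.toFinite _)
        have hub4 : (S ∩ {v | G.dist x v ≤ j+4}).ncard ≤ k := by
          rw [← hScard]
          exact Set.ncard_le_ncard Set.inter_subset_left (Set.toFinite _)
        have hfc4 := (IH (N-1) (by omega)).2 x S hS hScard (j+4) (by omega) vm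
        omega
      -- R and its cardinality
      set R := S ∩ {v | j+5 ≤ G.dist x v} with hRdef
      have hspS : (S ∩ {v | G.dist x v ≤ j+4}).ncard + R.ncard = k := by
        rw [← hScard]
        refine ncard_split_pred S _ _ ?_ ?_
        · intro d _
          by_cases h : G.dist x d ≤ j+4
          · exact Or.inl h
          · exact Or.inr (by simp only [Set.mem_setOf_eq]; omega)
        · intro u h1 h2
          simp only [Set.mem_setOf_eq] at h1 h2
          omega
      have hB4eq : S ∩ {v | G.dist x v ≤ j+4} = S ∩ {v | G.dist x v ≤ j+3} := by
        ext u
        simp only [Set.mem_inter_iff, Set.mem_setOf_eq]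
        constructor
        · rintro ⟨h1, h2⟩
          have := h4' u h1
          exact ⟨h1, by omega⟩
        · rintro ⟨h1, h2⟩
          exact ⟨h1, by omega⟩
      have hRcard : R.ncard + sj + 1 = k := by
        rw [hB4eq, hcard3] at hspS
        omega
      -- coverage of levels j+2 and j+3 by w
      have hwcov : ∀ u, G.dist x u = j+2 ∨ G.dist x u = j+3 → (w = u ∨ G.Adj w u) := by
        intro u hu
        obtain ⟨s, hsS, hsd⟩ := hS u
        have hb := lv_le_of_dom hconn (x := x) hsd
        have h1 := hocc s hsS
        have h2 := h4' s hsS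
        have hs3 : G.dist x s = j+3 := by omega
        have := h3' s hsS hs3
        subst this
        exact hsd
      -- coverage of levels ≥ j+4 by {w} ∪ R
      have hfarcov : ∀ u, j+4 ≤ G.dist x u →
          (w = u ∨ G.Adj w u) ∨ ∃ s ∈ R, s = u ∨ G.Adj s u := by
        intro u hu
        obtain ⟨s, hsS, hsd⟩ := hS u
        have hb := lv_le_of_dom hconn (x := x) hsd
        have h1 := hocc s hsS
        have h2 := h4' s hsS
        rcases Nat.lt_or_ge (G.dist x s) (j+5) with hs5 | hs5
        · have hs3 : G.dist x s = j+3 := by omega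
          have := h3' s hsS hs3
          subst this
          exact Or.inl hsd
        · exact Or.inr ⟨s, ⟨hsS, by simp only [Set.mem_setOf_eq]; omega⟩, hsd⟩
      -- apply the crux lemma
      refine hCR x vm hvm (j+2) (k - sj) w R ?_ ?_ ?_ ?_ ?_ ?_ ?_ ?_ ?_ ?_ ?_
      · omega
      · omega
      · omega
      · omega
      · -- H1
        intro T' hT'
        have hdomU : ∀ u, ∃ s ∈ T' ∪ insert w R, s = u ∨ G.Adj s u := by
          intro u
          rcases Nat.lt_or_ge (G.dist x u) (j+2) with hu | hu
          · obtain ⟨s, hs, hsd⟩ := hT' u (by omega)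
            exact ⟨s, Set.mem_union_left _ hs, hsd⟩
          rcases Nat.lt_or_ge (G.dist x u) (j+4) with hu4 | hu4
          · have := hwcov u (by omega)
            exact ⟨w, Set.mem_union_right _ (Set.mem_insert _ _), this⟩
          · rcases hfarcov u hu4 with h | ⟨s, hs, hsd⟩
            · exact ⟨w, Set.mem_union_right _ (Set.mem_insert _ _), h⟩
            · exact ⟨s, Set.mem_union_right _ (Set.mem_insert_of_mem _ hs), hsd⟩
        have h1 := domNum_le hdomU
        have h2 := Set.ncard_union_le T' (insert w R)
        have h3 := Set.ncard_insert_le w R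
        omega
      · omega
      · omega
      · -- w covers levels j+2 = t, j+3 = t+1
        intro u hu
        exact hwcov u hu
      · -- R levels
        rintro r ⟨-, hr⟩
        simp only [Set.mem_setOf_eq] at hr
        omega
      · omega
      · -- far coverage
        intro u hu
        exact hfarcov u (by omega)
  exact le_trans (hvm v) hmain

end Helpers

/-- Let k ≥ 3 and l ≥ 3 be integers, and let G be a connected weak k-bicritical graph
having an l-sufficient pair. Then diam(G) ≤ 2k − l + 1. -/
theorem stmt_17 {V : Type*} [Fintype V] (G : SimpleGraph V) (k l : ℕ)
    (hk : 3 ≤ k) (hl : 3 ≤ l) (hconn : G.Connected)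
    (hwb : WeakBicriticalOn G Set.univ) (hdom : domNum G = k)
    (hsuff : ∃ (x : V) (j : ℕ), SufficientPair G l x j) :
    (G.diam : ℤ) ≤ 2 * (k : ℤ) - (l : ℤ) + 1 := by
  obtain ⟨x, j, hj2, ⟨y₀, hy₀⟩, S, hSdom, hScard, hineq⟩ := hsuff
  have hdom' : domNumOn G Set.univ = k := hdom
  have hS : ∀ v, ∃ s ∈ S, s = v ∨ G.Adj s v := fun v => hSdom.2 v (Set.mem_univ v)
  have hScard' : S.ncard = k := by rw [hScard]; exact hdom
  have hsjk : (S ∩ {v | G.dist x v ≤ j}).ncard ≤ k := by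
    rw [← hScard']
    exact Set.ncard_le_ncard Set.inter_subset_left (Set.toFinite _)
  have h1 := (master hconn hwb hdom' k).2 x S hS hScard' j (by omega) y₀
  rw [hy₀] at h1
  have h2 : j + l ≤ 2 * (S ∩ {v | G.dist x v ≤ j}).ncard := hineq
  omega
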